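/- (Reed–Solomon codes are list decodable beyond the Johnson-type bound) Let q be a prime power, γ a primitive element of F_q, and let k, n be integers with 1 + n/2 ≤ k ≤ n − 2 and n ≤ q − 1. Let δ = (n − k + 2)/n be the relative minimum pair distance of RS[n,k]. Then RS[n,k] is ((2/3)δn − 8/3, q)_P-list decodable; moreover, if additionally n > 8 / (3·((2/3)δ − 1 + √(1−δ))) (which is possible for any fixed δ ∈ (0, 3/4) since (2/3)δ > 1 − √(1−δ) there), then the list decoding radius (2/3)δn − 8/3 strictly exceeds the Johnson-type radius n·(1 − √(1−δ)). -/

import Mathlib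

/-
A nonzero interpolation polynomial `Q₀(x) + Q₁(x) y₁ + Q₂(x) y₂` with `deg Q₀ < D + k`,
`deg Q₁, deg Q₂ ≤ D` and `D = ⌊(n - k + 1) / 3⌋` vanishes at every pair read
`(γ^i, y_i, y_{i+1})` of the received word, because it has more coefficients than there are
conditions. For a codeword `f` within pair distance `(2(n - k) - 4) / 3`, the polynomial
`Q₀ + Q₁ f + Q₂ f(γX)` has degree `< D + k` but vanishes at more than that many points
`γ^i`, hence is zero. So every codeword of the list solves the linear functional equation
`Q₀ + Q₁ f + Q₂ f(γX) = 0`; differences of solutions solve the homogeneous equation, whose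
nonzero solutions all have the same degree `d` because `γ` has order at least `n`. Hence a
solution is determined by its `d`-th coefficient, and the list has at most `q` elements.
The comparison with the Johnson radius comes down to `1 - 2δ/3 < √(1 - δ)`, i.e. `δ < 3/4`.
-/

open scoped Classical

def pairDist {F : Type*} [DecidableEq F] {n : ℕ} (x y : Fin n → F) : ℕ :=
  (Finset.univ.filter fun i : Fin n =>
    (x i, x ⟨(i.1 + 1) % n, Nat.mod_lt _ i.pos⟩) ≠
    (y i, y ⟨(i.1 + 1) % n, Nat.mod_lt _ i.pos⟩)).card

theorem ne_zero_of_orderOf_pos {M₀ : Type*} [MonoidWithZero M₀] [Nontrivial M₀] {x : M₀}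
    (h : 0 < orderOf x) : x ≠ 0 := by
  rintro rfl
  simp [orderOf_zero] at h

open Polynomial Finset

namespace Polynomial

variable {F : Type*} [Field F] {γ : F}

theorem natDegree_comp_C_mul_X (hγ : γ ≠ 0) (p : F[X]) :
    (p.comp (C γ * X)).natDegree = p.natDegree := by
  rw [natDegree_comp, natDegree_C_mul_X γ hγ, mul_one]

theorem leadingCoeff_comp_C_mul_X (hγ : γ ≠ 0) (p : F[X]) :
    (p.comp (C γ * X)).leadingCoeff = p.leadingCoeff * γ ^ p.natDegree := by
  rw [leadingCoeff_comp (by simp [natDegree_C_mul_X γ hγ]), leadingCoeff_C_mul_X]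

/-- Comparing leading coefficients of `h₁(γX) h₂ = h₂(γX) h₁` gives `γ ^ deg h₁ = γ ^ deg h₂`. -/
theorem natDegree_eq_of_mul_add_mul_comp_eq_zero {Q₁ Q₂ h₁ h₂ : F[X]} (hQ : (Q₁, Q₂) ≠ 0)
    (h₁0 : h₁ ≠ 0) (h₂0 : h₂ ≠ 0)
    (e₁ : Q₁ * h₁ + Q₂ * h₁.comp (C γ * X) = 0) (e₂ : Q₁ * h₂ + Q₂ * h₂.comp (C γ * X) = 0)
    (hd₁ : h₁.natDegree < orderOf γ) (hd₂ : h₂.natDegree < orderOf γ) :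
    h₁.natDegree = h₂.natDegree := by
  have hγ := ne_zero_of_orderOf_pos (Nat.zero_lt_of_lt hd₁)
  have hQ₂ : Q₂ ≠ 0 := by
    rintro rfl
    simp_all
  have hcross : h₁.comp (C γ * X) * h₂ = h₂.comp (C γ * X) * h₁ := by
    have : Q₂ * (h₁.comp (C γ * X) * h₂ - h₂.comp (C γ * X) * h₁) = 0 := by
      linear_combination h₂ * e₁ - h₁ * e₂
    simpa [hQ₂, sub_eq_zero] using this
  have hlc := congrArg leadingCoeff hcross
  simp only [leadingCoeff_mul, leadingCoeff_comp_C_mul_X hγ] at hlc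
  have hpow : γ ^ h₁.natDegree = γ ^ h₂.natDegree := by
    have hl : h₁.leadingCoeff * h₂.leadingCoeff ≠ 0 := by simp [h₁0, h₂0]
    exact mul_left_cancel₀ hl (by linear_combination hlc)
  exact pow_injOn_Iio_orderOf hd₁ hd₂ hpow

theorem exists_injOn_coeff_of_add_mul_add_mul_comp_eq_zero {Q₀ Q₁ Q₂ : F[X]}
    (hQ : (Q₀, Q₁, Q₂) ≠ 0) :
    ∃ d, Set.InjOn (fun f : F[X] => f.coeff d)
      {f | f.natDegree < orderOf γ ∧ Q₀ + Q₁ * f + Q₂ * f.comp (C γ * X) = 0} := by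
  set S := {f : F[X] | f.natDegree < orderOf γ ∧ Q₀ + Q₁ * f + Q₂ * f.comp (C γ * X) = 0}
  have hsol : ∀ f ∈ S, ∀ g ∈ S, (f - g).natDegree < orderOf γ ∧
      Q₁ * (f - g) + Q₂ * (f - g).comp (C γ * X) = 0 := by
    rintro f ⟨hf, ef⟩ g ⟨hg, eg⟩
    refine ⟨(natDegree_sub_le f g).trans_lt (max_lt hf hg), ?_⟩
    rw [sub_comp]
    linear_combination ef - eg
  by_cases hpair : ∃ f₀ ∈ S, ∃ g₀ ∈ S, f₀ ≠ g₀
  · obtain ⟨f₀, hf₀, g₀, hg₀, hne⟩ := hpair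
    have hQ' : (Q₁, Q₂) ≠ 0 := by
      intro h
      obtain ⟨rfl, rfl⟩ := Prod.mk_eq_zero.mp h
      exact hQ (by simpa using hf₀.2)
    refine ⟨(f₀ - g₀).natDegree, fun f hf g hg hfg => ?_⟩
    by_contra hne'
    obtain ⟨hd, e⟩ := hsol f hf g hg
    obtain ⟨hd₀, e₀⟩ := hsol f₀ hf₀ g₀ hg₀
    have hdeg := natDegree_eq_of_mul_add_mul_comp_eq_zero hQ' (sub_ne_zero.mpr hne')
      (sub_ne_zero.mpr hne) e e₀ hd hd₀
    apply leadingCoeff_ne_zero.mpr (sub_ne_zero.mpr hne')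
    rw [leadingCoeff, hdeg, coeff_sub, sub_eq_zero]
    exact hfg
  · push Not at hpair
    exact ⟨0, fun f hf g hg _ => hpair f hf g hg⟩

theorem natDegree_add_mul_add_mul_comp_le (hγ : γ ≠ 0) {Q₀ Q₁ Q₂ f : F[X]} {a b : ℕ}
    (h₀ : Q₀.natDegree ≤ a + b) (h₁ : Q₁.natDegree ≤ a) (h₂ : Q₂.natDegree ≤ a)
    (hf : f.natDegree ≤ b) : (Q₀ + Q₁ * f + Q₂ * f.comp (C γ * X)).natDegree ≤ a + b :=
  natDegree_add_le_of_degree_le (natDegree_add_le_of_degree_le h₀ (natDegree_mul_le_of_le h₁ hf))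
    (natDegree_mul_le_of_le h₂ ((natDegree_comp_C_mul_X hγ f).trans_le hf))

theorem finrank_degreeLT (m : ℕ) : Module.finrank F F[X]_m = m := by
  rw [(degreeLTEquiv F m).finrank_eq, Module.finrank_fin_fun]

instance (m : ℕ) : FiniteDimensional F F[X]_m :=
  (degreeLTEquiv F m).symm.finiteDimensional

theorem natDegree_lt_of_mem_degreeLT {p : F[X]} {m : ℕ} (hm : m ≠ 0) (hp : p ∈ F[X]_m) :
    p.natDegree < m := by
  rcases eq_or_ne p 0 with rfl | h
  · simpa using Nat.pos_of_ne_zero hm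
  · exact (natDegree_lt_iff_degree_lt h).mpr (mem_degreeLT.mp hp)

theorem exists_interpolating_triple {ι : Type*} [Fintype ι] (x u v : ι → F) {a b c : ℕ}
    (h : Fintype.card ι < a + b + c) :
    ∃ Q₀ Q₁ Q₂ : F[X], (Q₀, Q₁, Q₂) ≠ 0 ∧ Q₀ ∈ F[X]_a ∧ Q₁ ∈ F[X]_b ∧ Q₂ ∈ F[X]_c ∧
      ∀ i, Q₀.eval (x i) + Q₁.eval (x i) * u i + Q₂.eval (x i) * v i = 0 := by
  let L : F[X]_a × F[X]_b × F[X]_c →ₗ[F] ι → F :=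
    { toFun := fun Q i => (Q.1 : F[X]).eval (x i) + (Q.2.1 : F[X]).eval (x i) * u i
        + (Q.2.2 : F[X]).eval (x i) * v i
      map_add' := fun _ _ => by ext; simp; ring
      map_smul' := fun _ _ => by ext; simp; ring }
  have hker : LinearMap.ker L ≠ ⊥ := LinearMap.ker_ne_bot_of_finrank_lt <| by
    simpa [Module.finrank_prod, finrank_degreeLT, add_assoc] using h
  obtain ⟨⟨Q₀, Q₁, Q₂⟩, hQ, hne⟩ := (Submodule.ne_bot_iff _).mp hker
  refine ⟨Q₀, Q₁, Q₂, ?_, Q₀.2, Q₁.2, Q₂.2, fun i => congrFun hQ i⟩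
  simpa [Prod.ext_iff] using hne

end Polynomial

section PairDecoding

variable {F : Type*} {n : ℕ}

def cyclicSucc (i : Fin n) : Fin n := ⟨(i.1 + 1) % n, Nat.mod_lt _ i.pos⟩

theorem cyclicSucc_of_lt {i : Fin n} (h : i.1 + 1 < n) : cyclicSucc i = ⟨i.1 + 1, h⟩ :=
  Fin.ext (Nat.mod_eq_of_lt h)

/-- Only non-wrapping positions are counted, since `γ ^ (i + 1) = γ * γ ^ i` fails at the
wrap-around from `n - 1` to `0`. -/
def pairAgreements [DecidableEq F] (x y : Fin n → F) : Finset (Fin n) :=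
  univ.filter fun i => ∃ h : i.1 + 1 < n, x i = y i ∧ x ⟨i.1 + 1, h⟩ = y ⟨i.1 + 1, h⟩

theorem le_card_pairAgreements_add_pairDist [DecidableEq F] (x y : Fin n → F) :
    n ≤ #(pairAgreements x y) + pairDist x y + 1 := by
  rcases Nat.eq_zero_or_pos n with rfl | hn
  · simp
  have hdist : pairDist x y =
      #(univ.filter fun i => (x i, x (cyclicSucc i)) ≠ (y i, y (cyclicSucc i))) := rfl
  have hsub : univ.filter (fun i => ¬(x i, x (cyclicSucc i)) ≠ (y i, y (cyclicSucc i))) ⊆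
      pairAgreements x y ∪ {⟨n - 1, by omega⟩} := by
    intro i hi
    rw [mem_filter, not_not, Prod.mk.injEq] at hi
    rcases Nat.lt_or_ge (i.1 + 1) n with hlt | hge
    · rw [cyclicSucc_of_lt hlt] at hi
      exact mem_union_left _ (mem_filter.mpr ⟨mem_univ _, hlt, hi.2⟩)
    · exact mem_union_right _ (mem_singleton.mpr (Fin.ext (by simp; omega)))
  have hsplit := card_filter_add_card_filter_not (s := univ)
    fun i => (x i, x (cyclicSucc i)) ≠ (y i, y (cyclicSucc i))
  have := (card_le_card hsub).trans (card_union_le _ _)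
  rw [card_univ, Fintype.card_fin] at hsplit
  rw [card_singleton] at this
  omega

variable [Field F]

def rsCodeword (γ : F) (n : ℕ) (f : F[X]) : Fin n → F := fun i => f.eval (γ ^ (i : ℕ))

variable [DecidableEq F]

theorem add_mul_add_mul_comp_eq_zero_of_pairDist {γ : F} (hn : n ≤ orderOf γ) {y : Fin n → F}
    {Q₀ Q₁ Q₂ f : F[X]}
    (hQ : ∀ i : Fin n, Q₀.eval (γ ^ (i : ℕ)) + Q₁.eval (γ ^ (i : ℕ)) * y i
      + Q₂.eval (γ ^ (i : ℕ)) * y (cyclicSucc i) = 0)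
    (hdeg : (Q₀ + Q₁ * f + Q₂ * f.comp (C γ * X)).natDegree
      + pairDist y (rsCodeword γ n f) + 1 < n) :
    Q₀ + Q₁ * f + Q₂ * f.comp (C γ * X) = 0 := by
  have hcard := le_card_pairAgreements_add_pairDist y (rsCodeword γ n f)
  refine eq_zero_of_natDegree_lt_card_of_eval_eq_zero _
    (f := fun i : pairAgreements y (rsCodeword γ n f) => γ ^ i.1.1)
    (fun i j hij => Subtype.ext (Fin.ext (pow_injOn_Iio_orderOf (i.1.2.trans_le hn)
      (j.1.2.trans_le hn) hij))) (fun ⟨i, hi⟩ => ?_) (by rw [Fintype.card_coe]; omega)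
  obtain ⟨hlt, hy, hy'⟩ := (mem_filter.mp hi).2
  simp only [rsCodeword] at hy hy'
  simpa only [eval_add, eval_mul, eval_comp, eval_C, eval_X, ← pow_succ', ← hy,
    cyclicSucc_of_lt hlt, ← hy'] using hQ i

theorem card_filter_pairDist_le_card [Fintype F] {γ : F} {k : ℕ} (hn : n ≤ orderOf γ)
    (y : Fin n → F) :
    #{c | (∃ f : F[X], f.natDegree < k ∧ c = rsCodeword γ n f) ∧
      3 * pairDist y c + 4 ≤ 2 * (n - k)} ≤ Fintype.card F := by
  set D := (n - k + 1) / 3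
  obtain ⟨Q₀, Q₁, Q₂, hQ, h₀, h₁, h₂, hI⟩ := exists_interpolating_triple
    (fun i : Fin n => γ ^ (i : ℕ)) y (fun i => y (cyclicSucc i))
    (a := D + k) (b := D + 1) (c := D + 1) (by simp only [Fintype.card_fin]; omega)
  obtain ⟨d, hinj⟩ := exists_injOn_coeff_of_add_mul_add_mul_comp_eq_zero (γ := γ) hQ
  set P := {f : F[X] | f.natDegree < orderOf γ ∧ Q₀ + Q₁ * f + Q₂ * f.comp (C γ * X) = 0}
  have hlist : ∀ f : F[X], f.natDegree < k → 3 * pairDist y (rsCodeword γ n f) + 4 ≤ 2 * (n - k) →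
      f ∈ P := by
    intro f hf hdist
    have hγ : γ ≠ 0 := ne_zero_of_orderOf_pos (by omega)
    have hR : (Q₀ + Q₁ * f + Q₂ * f.comp (C γ * X)).natDegree ≤ D + (k - 1) :=
      natDegree_add_mul_add_mul_comp_le hγ
        (by have := natDegree_lt_of_mem_degreeLT (by omega) h₀; omega)
        (by have := natDegree_lt_of_mem_degreeLT (by omega) h₁; omega)
        (by have := natDegree_lt_of_mem_degreeLT (by omega) h₂; omega) (by omega)
    exact ⟨by omega, add_mul_add_mul_comp_eq_zero_of_pairDist hn hI (by omega)⟩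
  calc _ ≤ (rsCodeword γ n '' P).ncard := by
        rw [← Set.ncard_coe_finset]
        refine Set.ncard_le_ncard fun c hc => ?_
        obtain ⟨⟨f, hf, rfl⟩, hdist⟩ := (mem_filter.mp hc).2
        exact ⟨f, hlist f hf hdist, rfl⟩
    _ ≤ P.ncard :=
      Set.ncard_image_le (Set.Finite.of_injOn (Set.mapsTo_univ _ _) hinj Set.finite_univ)
    _ = ((fun f : F[X] => f.coeff d) '' P).ncard := hinj.ncard_image.symm
    _ ≤ Nat.card F := Set.ncard_le_card _
    _ = Fintype.card F := Nat.card_eq_fintype_card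

end PairDecoding

theorem one_sub_two_thirds_mul_lt_sqrt_one_sub {δ : ℝ} (hδ₀ : 0 < δ) (hδ : δ < 3 / 4) :
    1 - 2 / 3 * δ < Real.sqrt (1 - δ) := by
  rw [Real.lt_sqrt (by linarith)]
  nlinarith

theorem two_thirds_mul_sub_gt_johnson {δ N : ℝ} (hδ₀ : 0 < δ) (hδ : δ < 3 / 4)
    (hN : N > 8 / (3 * (2 / 3 * δ - 1 + Real.sqrt (1 - δ)))) :
    2 / 3 * δ * N - 8 / 3 > N * (1 - Real.sqrt (1 - δ)) := by
  have hgap := one_sub_two_thirds_mul_lt_sqrt_one_sub hδ₀ hδ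
  have := (div_lt_iff₀ (by linarith)).mp hN
  linarith

/-- (Reed–Solomon codes are list decodable beyond the Johnson-type bound) Let `F` be
the finite field of size `q`, `γ` a primitive element of `F`, and `k, n` integers with
`1 + n/2 ≤ k ≤ n − 2` and `n ≤ q − 1`. Let `δ = (n − k + 2)/n` be the relative minimum
pair distance of `RS[n,k]`. Then `RS[n,k]` is `((2/3)δn − 8/3, q)_P`-list decodable;
moreover, if additionally `n > 8 / (3·((2/3)δ − 1 + √(1−δ)))`, then the list decoding
radius `(2/3)δn − 8/3` strictly exceeds the Johnson-type radius `n·(1 − √(1−δ))`. -/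
theorem RS_beyond_johnson {F : Type*} [Field F] [Fintype F] [DecidableEq F]
    {q n k : ℕ} (hq : Fintype.card F = q)
    (γ : F) (hγ : orderOf γ = q - 1)
    (hk : 1 + (n : ℝ) / 2 ≤ (k : ℝ)) (hkn : k ≤ n - 2) (hnq : n ≤ q - 1) :
    let δ : ℝ := ((n : ℝ) - (k : ℝ) + 2) / (n : ℝ)
    (∀ y : Fin n → F,
      (Finset.univ.filter fun c : Fin n → F =>
        (∃ f : Polynomial F, f.natDegree ≤ k - 1 ∧
          c = fun i : Fin n => f.eval (γ ^ (i : ℕ))) ∧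
        (pairDist y c : ℝ) ≤ 2 / 3 * δ * (n : ℝ) - 8 / 3).card ≤ q) ∧
    ((n : ℝ) > 8 / (3 * (2 / 3 * δ - 1 + Real.sqrt (1 - δ))) →
      2 / 3 * δ * (n : ℝ) - 8 / 3 > (n : ℝ) * (1 - Real.sqrt (1 - δ))) := by
  intro δ
  have hk₁ : 1 ≤ k := by
    have : (1 : ℝ) ≤ k := by linarith [(by positivity : (0 : ℝ) ≤ (n : ℝ) / 2)]
    exact_mod_cast this
  have hkn' : ((k + 2 : ℕ) : ℝ) ≤ n := by exact_mod_cast (by omega : k + 2 ≤ n)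
  push_cast at hkn'
  have hn : (0 : ℝ) < n := by linarith
  have hδn : δ * n = n - k + 2 := div_mul_cancel₀ _ hn.ne'
  refine ⟨fun y => ?_, two_thirds_mul_sub_gt_johnson (div_pos (by linarith) hn) ?_⟩
  · calc _ ≤ #{c | (∃ f : F[X], f.natDegree < k ∧ c = rsCodeword γ n f) ∧
            3 * pairDist y c + 4 ≤ 2 * (n - k)} := by
          refine card_le_card (monotone_filter_right _
            fun c _ ⟨⟨f, hf, hc⟩, hd⟩ => ⟨⟨f, by omega, hc⟩, ?_⟩)
          have : (3 * pairDist y c + 4 : ℝ) ≤ 2 * ((n - k : ℕ) : ℝ) := by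
            rw [Nat.cast_sub (by omega)]
            linarith
          exact_mod_cast this
      _ ≤ Fintype.card F := card_filter_pairDist_le_card (hγ ▸ hnq) y
      _ = q := hq
  · exact lt_of_mul_lt_mul_right (by linarith) hn.le
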